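/- For every positive integer k, there do not exist a positive integer d and positive semidefinite Hermitian d×d complex matrices A_1,…,A_8 such that (f_8(x))^k = det(x_1 A_1 + ⋯ + x_8 A_8) as polynomials in x_1,…,x_8, where f_8 is the basis generating polynomial of the Vámos matroid V_8. -/

import Mathlib

open MvPolynomial
open scoped ComplexOrder

/-- The collection of bases of the 8-element Vámos matroid `V₈`: all 4-element subsets
of `{1,…,8}` except `{1,2,3,4}, {1,2,5,6}, {1,2,7,8}, {3,4,5,6}, {5,6,7,8}`. -/
def vamosBases8 : Finset (Finset ℕ) :=
  ((Finset.Icc 1 8).powersetCard 4) \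
    {{1, 2, 3, 4}, {1, 2, 5, 6}, {1, 2, 7, 8}, {3, 4, 5, 6}, {5, 6, 7, 8}}

/-- The basis generating polynomial `f₈ = Σ_{B} Π_{i ∈ B} xᵢ ∈ ℝ[x₁,…,x₈]` of the
Vámos matroid `V₈`. -/
noncomputable def f8 : MvPolynomial ℕ ℝ :=
  ∑ B ∈ vamosBases8, ∏ i ∈ B, X i

/-!
Substituting `xᵢ = t + 1` for `i ∈ S` and `xᵢ = 1` for `i ∉ S` turns `f₈ᵏ = det (∑ xᵢ Aᵢ)` into
an identity of polynomials in `t`. Since `∑ Aᵢ` is positive definite (its determinant is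
`f₈(1)ᵏ ≠ 0`), the degree on the right is `rank (∑_{i ∈ S} Aᵢ)`, while on the left it is
`k · r(S)`, where `r` is the rank function of `V₈`. For positive semidefinite `Aᵢ` that rank is
the codimension of `⋂_{i ∈ S} ker Aᵢ`, and codimensions of intersections of subspaces satisfy
the Ingleton inequality. So `k · r` satisfies it too, but `V₈` violates it at
`({1,2}, {5,6}, {3,4}, {7,8})`, where it would read `16 ≤ 15`.
-/

open Module
open scoped Polynomial

section Ingleton

variable {ι : Type*} [DecidableEq ι]

def IngletonInequality (ρ : Finset ι → ℕ) (a b c d : Finset ι) : Prop :=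
  ρ a + ρ b + ρ (a ∪ b ∪ c) + ρ (a ∪ b ∪ d) + ρ (c ∪ d) ≤
    ρ (a ∪ b) + ρ (a ∪ c) + ρ (a ∪ d) + ρ (b ∪ c) + ρ (b ∪ d)

theorem IngletonInequality.of_mul {ρ : Finset ι → ℕ} {a b c d : Finset ι} {k : ℕ}
    (hk : 0 < k) (h : IngletonInequality (fun S => k * ρ S) a b c d) :
    IngletonInequality ρ a b c d := by
  unfold IngletonInequality at h ⊢
  simp only [← mul_add] at h
  exact Nat.le_of_mul_le_mul_left h hk

end Ingleton

namespace Submodule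

variable {K V : Type*} [DivisionRing K] [AddCommGroup V] [Module K V] [FiniteDimensional K V]

theorem finrank_inf_add_finrank_inf_le (U W Z : Submodule K V) :
    finrank K ↥(U ⊓ Z) + finrank K ↥(W ⊓ Z) ≤
      finrank K ↥((U ⊔ W) ⊓ Z) + finrank K ↥(U ⊓ W ⊓ Z) := by
  have hsup : U ⊓ Z ⊔ W ⊓ Z ≤ (U ⊔ W) ⊓ Z :=
    le_inf (sup_le_sup inf_le_left inf_le_left) (sup_le inf_le_right inf_le_right)
  have hinf : U ⊓ Z ⊓ (W ⊓ Z) = U ⊓ W ⊓ Z := by rw [inf_inf_inf_comm, inf_idem]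
  rw [← finrank_sup_add_finrank_inf_eq, hinf]
  exact Nat.add_le_add_right (finrank_mono hsup) _

theorem ingleton_finrank_inf (A B C D : Submodule K V) :
    finrank K ↥(A ⊓ B) + finrank K ↥(A ⊓ C) + finrank K ↥(A ⊓ D) + finrank K ↥(B ⊓ C)
        + finrank K ↥(B ⊓ D) ≤
      finrank K A + finrank K B + finrank K ↥(A ⊓ B ⊓ C) + finrank K ↥(A ⊓ B ⊓ D)
        + finrank K ↥(C ⊓ D) := by
  have hC := finrank_inf_add_finrank_inf_le A B C
  have hD := finrank_inf_add_finrank_inf_le A B D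
  have hCD := finrank_inf_add_finrank_inf_le C D (A ⊔ B)
  have hAB := finrank_sup_add_finrank_inf_eq A B
  have h₁ := finrank_mono (inf_le_right : (C ⊔ D) ⊓ (A ⊔ B) ≤ A ⊔ B)
  have h₂ := finrank_mono (inf_le_left : C ⊓ D ⊓ (A ⊔ B) ≤ C ⊓ D)
  rw [inf_comm C, inf_comm D] at hCD
  omega

theorem ingletonInequality_finrank_quotient_iInf {ι : Type*} [DecidableEq ι]
    (W : ι → Submodule K V) (a b c d : Finset ι) :
    IngletonInequality (fun S => finrank K (V ⧸ ⨅ i ∈ S, W i)) a b c d := by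
  have hcodim (U : Submodule K V) :
      (finrank K (V ⧸ U) : ℤ) = finrank K V - finrank K U := by
    rw [← U.finrank_quotient_add_finrank]; push_cast; ring
  have h :=
    ingleton_finrank_inf (⨅ i ∈ a, W i) (⨅ i ∈ b, W i) (⨅ i ∈ c, W i) (⨅ i ∈ d, W i)
  unfold IngletonInequality
  zify at h ⊢
  simp only [hcodim]
  repeat rw [Finset.iInf_union]
  linarith

end Submodule

namespace Matrix

variable {n 𝕜 : Type*} [Fintype n] [RCLike 𝕜]

theorem PosSemidef.ker_mulVecLin_add {P Q : Matrix n n 𝕜} (hP : P.PosSemidef)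
    (hQ : Q.PosSemidef) :
    LinearMap.ker (P + Q).mulVecLin = LinearMap.ker P.mulVecLin ⊓ LinearMap.ker Q.mulVecLin := by
  ext x
  simp only [LinearMap.mem_ker, mulVecLin_apply, Submodule.mem_inf]
  refine ⟨fun hx => ?_, fun ⟨hPx, hQx⟩ => by rw [add_mulVec, hPx, hQx, add_zero]⟩
  have hsum : star x ⬝ᵥ P *ᵥ x + star x ⬝ᵥ Q *ᵥ x = 0 := by
    rw [← dotProduct_add, ← add_mulVec, hx, dotProduct_zero]
  obtain ⟨hPx, hQx⟩ := (add_eq_zero_iff_of_nonneg (hP.dotProduct_mulVec_nonneg x)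
    (hQ.dotProduct_mulVec_nonneg x)).mp hsum
  exact ⟨(hP.dotProduct_mulVec_zero_iff x).mp hPx, (hQ.dotProduct_mulVec_zero_iff x).mp hQx⟩

theorem ker_mulVecLin_sum_of_posSemidef {ι : Type*} {s : Finset ι} {A : ι → Matrix n n 𝕜}
    (hA : ∀ i ∈ s, (A i).PosSemidef) :
    LinearMap.ker (∑ i ∈ s, A i).mulVecLin = ⨅ i ∈ s, LinearMap.ker (A i).mulVecLin := by
  classical
  induction s using Finset.induction_on with
  | empty => simp
  | insert a s ha ih =>
    have hs : ∀ i ∈ s, (A i).PosSemidef := fun i hi => hA i (Finset.mem_insert_of_mem hi)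
    rw [Finset.sum_insert ha,
      (hA a (s.mem_insert_self a)).ker_mulVecLin_add (posSemidef_sum s hs), ih hs,
      Finset.iInf_insert]

theorem rank_sum_eq_finrank_quotient_iInf_ker {ι : Type*} {s : Finset ι}
    {A : ι → Matrix n n 𝕜} (hA : ∀ i ∈ s, (A i).PosSemidef) :
    (∑ i ∈ s, A i).rank = finrank 𝕜 ((n → 𝕜) ⧸ ⨅ i ∈ s, LinearMap.ker (A i).mulVecLin) := by
  rw [← ker_mulVecLin_sum_of_posSemidef hA, rank,
    (LinearMap.quotKerEquivRange _).finrank_eq]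

variable [DecidableEq n]

theorem IsHermitian.natDegree_charpolyRev {A : Matrix n n 𝕜} (hA : A.IsHermitian) :
    A.charpolyRev.natDegree = A.rank := by
  classical
  -- Reversing `charpoly` lowers its degree `card n` by the multiplicity of the root `0`,
  -- which is the number of zero eigenvalues.
  rw [← reverse_charpoly, Polynomial.reverse_natDegree, charpoly_natDegree_eq_dim,
    ← Polynomial.rootMultiplicity_eq_natTrailingDegree', ← Polynomial.count_roots,
    hA.roots_charpoly_eq_eigenvalues, hA.rank_eq_card_non_zero_eigs,
    Fintype.card_subtype_compl, Fintype.card_subtype, Multiset.count_map]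
  simp only [Function.comp_apply, eq_comm (a := (0 : 𝕜)), RCLike.ofReal_eq_zero,
    Finset.card_def, Finset.filter_val]

theorem IsHermitian.natDegree_det_X_smul_add_one {P : Matrix n n 𝕜} (hP : P.IsHermitian) :
    (det ((Polynomial.X : 𝕜[X]) • P.map Polynomial.C + 1)).natDegree = P.rank := by
  have h : det ((Polynomial.X : 𝕜[X]) • P.map Polynomial.C + 1) = (-P).charpolyRev := by
    simp [charpolyRev, sub_eq_add_neg, add_comm, Matrix.map_neg]
  rw [h, hP.neg.natDegree_charpolyRev, ← neg_one_smul 𝕜 P,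
    rank_smul_of_mem_nonZeroDivisors _ isUnit_neg_one.mem_nonZeroDivisors]

theorem IsHermitian.natDegree_det_X_smul_add_of_posDef {P Q : Matrix n n 𝕜}
    (hP : P.IsHermitian) (hQ : Q.PosDef) :
    (det ((Polynomial.X : 𝕜[X]) • P.map Polynomial.C + Q.map Polynomial.C)).natDegree =
      P.rank := by
  obtain ⟨B, rfl⟩ : ∃ B : Matrix n n 𝕜, Q = Bᴴ * B := by
    open scoped MatrixOrder in
    exact CStarAlgebra.nonneg_iff_eq_star_mul_self.mp hQ.posSemidef.nonneg
  have hB : IsUnit B.det := by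
    have := (isUnit_iff_isUnit_det _).mp hQ.isUnit
    rw [det_mul] at this
    exact isUnit_of_mul_isUnit_right this
  have hBH : IsUnit Bᴴ.det := by rw [det_conjTranspose]; exact hB.star
  have hP' := isHermitian_conjTranspose_mul_mul B⁻¹ hP
  have hPP' : P = Bᴴ * ((B⁻¹)ᴴ * P * B⁻¹) * B := by
    rw [conjTranspose_nonsing_inv, ← mul_assoc, ← mul_assoc, mul_nonsing_inv _ hBH, one_mul,
      nonsing_inv_mul_cancel_right _ _ hB]
  have hdetC (M : Matrix n n 𝕜) : (M.map Polynomial.C).det = Polynomial.C M.det :=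
    (RingHom.map_det Polynomial.C M).symm
  have hfactor : (Polynomial.X : 𝕜[X]) • P.map Polynomial.C + (Bᴴ * B).map Polynomial.C =
      Bᴴ.map Polynomial.C *
        ((Polynomial.X : 𝕜[X]) • ((B⁻¹)ᴴ * P * B⁻¹).map Polynomial.C + 1) *
        B.map Polynomial.C := by
    simp only [mul_add, add_mul, Matrix.mul_smul, Matrix.smul_mul, mul_one, ← Matrix.map_mul]
    rw [← hPP']
  rw [hfactor, det_mul, det_mul, hdetC, hdetC, mul_comm, ← mul_assoc, ← Polynomial.C_mul,
    Polynomial.natDegree_C_mul (hB.mul hBH).ne_zero, hP'.natDegree_det_X_smul_add_one]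
  conv_rhs => rw [hPP', rank_mul_eq_left_of_isUnit_det _ _ hB,
    rank_mul_eq_right_of_isUnit_det _ _ hBH]

end Matrix

theorem Polynomial.natDegree_sum_X_add_one_pow {R α : Type*} [Semiring R] [CharZero R]
    (s : Finset α) (m : α → ℕ) :
    (∑ a ∈ s, ((Polynomial.X : R[X]) + 1) ^ m a).natDegree = s.sup m := by
  rcases s.eq_empty_or_nonempty with rfl | hs
  · simp
  obtain ⟨a, ha, hma⟩ := s.exists_mem_eq_sup hs m
  have hdeg (b : α) : (((Polynomial.X : R[X]) + 1) ^ m b).natDegree = m b := by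
    simpa using Polynomial.natDegree_pow_X_add_C (R := R) (m b) 1
  refine le_antisymm (Polynomial.natDegree_sum_le_of_forall_le _ _ fun b hb =>
    (hdeg b).trans_le (Finset.le_sup hb)) (Polynomial.le_natDegree_of_ne_zero ?_)
  have hcoeff : (∑ b ∈ s, ((Polynomial.X : R[X]) + 1) ^ m b).coeff (s.sup m)
      = ((∑ b ∈ s, (m b).choose (s.sup m) : ℕ) : R) := by
    simp [Polynomial.coeff_X_add_one_pow]
  rw [hcoeff, Nat.cast_ne_zero, ← Nat.pos_iff_ne_zero]
  exact Finset.sum_pos' (fun _ _ => Nat.zero_le _) ⟨a, ha, by simp [hma]⟩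

section BasisGenerating

variable {ι : Type*}

noncomputable def basisGenPoly (R : Type*) [CommSemiring R] (𝓑 : Finset (Finset ι)) :
    MvPolynomial ι R :=
  ∑ B ∈ 𝓑, ∏ i ∈ B, X i

-- The rank function of the matroid whose set of bases is `𝓑`.
def basisRank [DecidableEq ι] (𝓑 : Finset (Finset ι)) (S : Finset ι) : ℕ :=
  𝓑.sup fun B => (B ∩ S).card

theorem map_basisGenPoly {R S : Type*} [CommSemiring R] [CommSemiring S] (f : R →+* S)
    (𝓑 : Finset (Finset ι)) : map f (basisGenPoly R 𝓑) = basisGenPoly S 𝓑 := by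
  simp [basisGenPoly]

theorem aeval_basisGenPoly {R A : Type*} [CommSemiring R] [CommSemiring A] [Algebra R A]
    (σ : ι → A) (𝓑 : Finset (Finset ι)) :
    aeval σ (basisGenPoly R 𝓑) = ∑ B ∈ 𝓑, ∏ i ∈ B, σ i := by
  simp [basisGenPoly]

end BasisGenerating

namespace Matrix

variable {ι n : Type*} [Fintype n] [DecidableEq n]

theorem aeval_det_sum_X_smul {R A : Type*} [CommRing R] [CommRing A] [Algebra R A] (σ : ι → A)
    (E : Finset ι) (M : ι → Matrix n n R) :
    aeval σ (det (∑ i ∈ E, (X i : MvPolynomial ι R) • (M i).map C)) =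
      det (∑ i ∈ E, σ i • (M i).map (algebraMap R A)) := by
  rw [AlgHom.map_det]
  congr 1
  ext a b
  simp [Matrix.sum_apply]

variable {𝕜 : Type*} [RCLike 𝕜] {𝓑 : Finset (Finset ι)} {E : Finset ι} {A : ι → Matrix n n 𝕜}
  {k : ℕ}

theorem posDef_sum_of_basisGenPoly_pow_eq_det (hA : ∀ i ∈ E, (A i).PosSemidef) (h𝓑 : 𝓑.Nonempty)
    (hrep : basisGenPoly 𝕜 𝓑 ^ k = det (∑ i ∈ E, (X i : MvPolynomial ι 𝕜) • (A i).map C)) :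
    (∑ i ∈ E, A i).PosDef := by
  refine (posSemidef_sum E hA).posDef_iff_det_ne_zero.mpr ?_
  have h := congrArg (aeval fun _ => (1 : 𝕜)) hrep
  simp only [map_pow, aeval_basisGenPoly, aeval_det_sum_X_smul, Finset.prod_const_one,
    Finset.sum_const, nsmul_eq_mul, mul_one, one_smul, Algebra.algebraMap_self, RingHom.coe_id,
    Matrix.map_id] at h
  rw [← h]
  exact pow_ne_zero _ (Nat.cast_ne_zero.mpr h𝓑.card_pos.ne')

variable [DecidableEq ι]

theorem sum_ite_mem_smul_map_algebraMap {S : Finset ι} (hS : S ⊆ E) :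
    ∑ i ∈ E, (if i ∈ S then Polynomial.X + 1 else 1 : 𝕜[X]) • (A i).map (algebraMap 𝕜 𝕜[X])
      = (Polynomial.X : 𝕜[X]) • (∑ i ∈ S, A i).map Polynomial.C
        + (∑ i ∈ E, A i).map Polynomial.C := by
  have hmap (s : Finset ι) :
      (∑ i ∈ s, A i).map Polynomial.C = ∑ i ∈ s, (A i).map Polynomial.C :=
    map_sum (Polynomial.C : 𝕜 →+* 𝕜[X]).mapMatrix _ _
  have hsplit (i : ι) : (if i ∈ S then Polynomial.X + 1 else 1 : 𝕜[X])
      = (if i ∈ S then Polynomial.X else 0) + 1 := by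
    split_ifs <;> simp
  simp only [hsplit, add_smul, one_smul, ite_smul, zero_smul, Finset.sum_add_distrib,
    Finset.sum_ite_mem, Finset.inter_eq_right.mpr hS, ← Finset.smul_sum, hmap,
    Polynomial.algebraMap_eq]

theorem rank_sum_eq_mul_basisRank (hA : ∀ i ∈ E, (A i).PosSemidef) (h𝓑 : 𝓑.Nonempty)
    (hrep : basisGenPoly 𝕜 𝓑 ^ k = det (∑ i ∈ E, (X i : MvPolynomial ι 𝕜) • (A i).map C))
    {S : Finset ι} (hS : S ⊆ E) :
    (∑ i ∈ S, A i).rank = k * basisRank 𝓑 S := by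
  let σ : ι → 𝕜[X] := fun i => if i ∈ S then Polynomial.X + 1 else 1
  have hf : (aeval σ (basisGenPoly 𝕜 𝓑 ^ k)).natDegree = k * basisRank 𝓑 S := by
    simp only [σ, map_pow, aeval_basisGenPoly, Finset.prod_ite_mem, Finset.prod_const,
      Polynomial.natDegree_pow, Polynomial.natDegree_sum_X_add_one_pow, basisRank]
  have hdet : (aeval σ (det (∑ i ∈ E, (X i : MvPolynomial ι 𝕜) • (A i).map C))).natDegree
      = (∑ i ∈ S, A i).rank := by
    rw [aeval_det_sum_X_smul, sum_ite_mem_smul_map_algebraMap hS,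
      (posSemidef_sum S fun i hi => hA i (hS hi)).isHermitian.natDegree_det_X_smul_add_of_posDef
        (posDef_sum_of_basisGenPoly_pow_eq_det hA h𝓑 hrep)]
  rw [← hdet, ← hrep, hf]

end Matrix

theorem not_ingletonInequality_basisRank_vamosBases8 :
    ¬ IngletonInequality (basisRank vamosBases8) {1, 2} {5, 6} {3, 4} {7, 8} := by
  unfold IngletonInequality
  decide +kernel

/-- No power of `f₈` has a definite determinantal representation: for every `k ≥ 1`
there are no `d ≥ 1` and positive semidefinite Hermitian `d × d` complex matrices
`A₁, …, A₈` with `(f₈)^k = det (x₁ A₁ + ⋯ + x₈ A₈)`. -/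
theorem f8_pow_no_definite_determinantal_rep :
    ∀ k : ℕ, 0 < k →
      ¬ ∃ (d : ℕ) (A : ℕ → Matrix (Fin d) (Fin d) ℂ),
          0 < d ∧ (∀ i ∈ Finset.Icc 1 8, (A i).PosSemidef) ∧
          (MvPolynomial.map (algebraMap ℝ ℂ) f8) ^ k =
            (∑ i ∈ Finset.Icc 1 8,
              (MvPolynomial.X i : MvPolynomial ℕ ℂ) • (A i).map MvPolynomial.C).det := by
  rintro k hk ⟨d, A, -, hA, hrep⟩
  rw [show f8 = basisGenPoly ℝ vamosBases8 from rfl, map_basisGenPoly] at hrep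
  have hcodim : ∀ S ⊆ Finset.Icc 1 8,
      finrank ℂ ((Fin d → ℂ) ⧸ ⨅ i ∈ S, LinearMap.ker (A i).mulVecLin) =
        k * basisRank vamosBases8 S := fun S hS => by
    rw [← Matrix.rank_sum_eq_finrank_quotient_iInf_ker fun i hi => hA i (hS hi),
      Matrix.rank_sum_eq_mul_basisRank hA (by decide) hrep hS]
  have hIngleton := Submodule.ingletonInequality_finrank_quotient_iInf
    (fun i => LinearMap.ker (A i).mulVecLin) {1, 2} {5, 6} {3, 4} {7, 8}
  unfold IngletonInequality at hIngleton
  simp (disch := decide) only [hcodim] at hIngleton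
  exact not_ingletonInequality_basisRank_vamosBases8 (IngletonInequality.of_mul hk hIngleton)
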